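/- Let ABCD be a tetrahedron of volume 1 with interior edge points K on CD, L on DA, M on AB, N on BC and ratios x = |CK|/|KD|, y = |DL|/|LA|, z = |AM|/|MB|, t = |BN|/|NC|. Then Vol(KLMN) + Vol(AKLM) + Vol(BLMN) + Vol(CKMN) + Vol(DKLN) + Vol(ACKM) + Vol(BDLN) = 1, provided xyzt < 1. -/

import Mathlib

open MeasureTheory

noncomputable def tetVol (A B C D : EuclideanSpace ℝ (Fin 3)) : ℝ :=
  (volume (convexHull ℝ {A, B, C, D})).toReal

/-!
Write every point in the affine frame `(A; B - A, C - A, D - A)`: `M = A + a • (B - A)`, and `N`,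
`K`, `L` likewise with parameters `b, c, d ∈ [0, 1)`, so that `z = a / (1 - a)` etc. An affine map
multiplies volumes by the absolute value of its determinant, so each of the seven volumes is
`|Δ| * vol ABCD` for a `3 × 3` determinant `Δ` in `a, b, c, d`. Six of these are, up to sign,
products of the parameters and their complements; the one of `KLMN` is
`(1 - a)(1 - b)(1 - c)(1 - d) - abcd`, which is nonnegative exactly when `xyzt ≤ 1`. Once the
absolute values are resolved, the seven polynomials add up to `1` identically.
-/

open Pointwise AffineMap Set

local notation "E³" => EuclideanSpace ℝ (Fin 3)

theorem MeasureTheory.Measure.addHaar_image_affineMap {E : Type*} [NormedAddCommGroup E]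
    [NormedSpace ℝ E] [MeasurableSpace E] [BorelSpace E] [FiniteDimensional ℝ E]
    (μ : Measure E) [μ.IsAddHaarMeasure] (f : E →ᵃ[ℝ] E) (s : Set E) :
    μ (f '' s) = ENNReal.ofReal |LinearMap.det f.linear| * μ s := by
  have hf : f '' s = f 0 +ᵥ f.linear '' s := by
    rw [← image_vadd, image_image]
    exact image_congr fun v _ => (congrFun f.decomp v).trans (add_comm _ _)
  rw [hf, measure_vadd, Measure.addHaar_image_linearMap]

theorem tetVol_image_affineMap (f : E³ →ᵃ[ℝ] E³) (P Q R S : E³) :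
    tetVol (f P) (f Q) (f R) (f S) = |LinearMap.det f.linear| * tetVol P Q R S := by
  have hset : ({f P, f Q, f R, f S} : Set E³) = f '' {P, Q, R, S} := by
    simp only [image_insert_eq, image_singleton]
  rw [tetVol, tetVol, hset, ← AffineMap.image_convexHull, Measure.addHaar_image_affineMap,
    ENNReal.toReal_mul, ENNReal.toReal_ofReal (abs_nonneg _)]

theorem tetVol_add_basis (b : Module.Basis (Fin 3) ℝ E³) (O : E³) (p q r s : Fin 3 → ℝ) :
    tetVol (O + b.equivFun.symm p) (O + b.equivFun.symm q) (O + b.equivFun.symm r)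
        (O + b.equivFun.symm s) =
      |(Matrix.of ![q - p, r - p, s - p]).det| * tetVol O (O + b 0) (O + b 1) (O + b 2) := by
  set M := Matrix.of ![q - p, r - p, s - p]
  -- `toLin` sends `b i` to the `i`-th column of its matrix, here the `i`-th row `M i` of `M`
  set L := Matrix.toLin b b M.transpose
  let f : E³ →ᵃ[ℝ] E³ := AffineMap.mk' (fun v => O + b.equivFun.symm p + L (v - O)) L O
    fun v => by simp only [vsub_eq_sub, vadd_eq_add, sub_self, map_zero, add_zero]; abel
  have hf : ∀ i, f (O + b i) = O + b.equivFun.symm (p + ![q - p, r - p, s - p] i) := fun i => by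
    simp only [f, AffineMap.coe_mk', add_sub_cancel_left, L, Matrix.toLin_self, map_add,
      Module.Basis.equivFun_symm_apply, Matrix.transpose_apply, M, Matrix.of_apply, add_assoc]
  have hO : f O = O + b.equivFun.symm p := by simp [f]
  have hdet : LinearMap.det f.linear = M.det := by
    rw [AffineMap.mk'_linear, LinearMap.det_toLin, Matrix.det_transpose]
  have := tetVol_image_affineMap f O (O + b 0) (O + b 1) (O + b 2)
  rw [hO, hf, hf, hf, hdet] at this
  simpa using this

theorem AffineIndependent.exists_basis_sub {A B C D : E³}
    (hABCD : AffineIndependent ℝ ![A, B, C, D]) :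
    ∃ b : Module.Basis (Fin 3) ℝ E³, ⇑b = ![B - A, C - A, D - A] := by
  have hli : LinearIndependent ℝ ![B - A, C - A, D - A] := by
    have h := (affineIndependent_iff_linearIndependent_vsub ℝ _ 0).mp hABCD
    have hsucc : Function.Injective
        fun i : Fin 3 => (⟨i.succ, Fin.succ_ne_zero i⟩ : {j : Fin 4 // j ≠ 0}) :=
      fun i j hij => by simpa using hij
    convert h.comp _ hsucc using 1
    · ext i : 1
      fin_cases i <;> rfl
    · rfl
  exact ⟨basisOfLinearIndependentOfCardEqFinrank hli (by simp),
    coe_basisOfLinearIndependentOfCardEqFinrank hli _⟩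

def tetPoint (A B C D : E³) (w : Fin 3 → ℝ) : E³ :=
  A + w 0 • (B - A) + w 1 • (C - A) + w 2 • (D - A)

theorem tetVol_tetPoint {A B C D : E³} (hABCD : AffineIndependent ℝ ![A, B, C, D])
    (p q r s : Fin 3 → ℝ) :
    tetVol (tetPoint A B C D p) (tetPoint A B C D q) (tetPoint A B C D r) (tetPoint A B C D s) =
      |(Matrix.of ![q - p, r - p, s - p]).det| * tetVol A B C D := by
  obtain ⟨b, hb⟩ := hABCD.exists_basis_sub
  have hpt : ∀ w, tetPoint A B C D w = A + b.equivFun.symm w := fun w => by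
    simp [tetPoint, Module.Basis.equivFun_symm_apply, Fin.sum_univ_three, hb, add_assoc]
  simpa [hpt, hb] using tetVol_add_basis b A p q r s

theorem tetVol_eq_of_tetPoint {A B C D P Q R S : E³} (hABCD : AffineIndependent ℝ ![A, B, C, D])
    {p q r s : Fin 3 → ℝ} (hP : P = tetPoint A B C D p) (hQ : Q = tetPoint A B C D q)
    (hR : R = tetPoint A B C D r) (hS : S = tetPoint A B C D s) {v : ℝ} (hv : 0 ≤ v)
    (hdet : (Matrix.of ![q - p, r - p, s - p]).det = v ∨
      (Matrix.of ![q - p, r - p, s - p]).det = -v) :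
    tetVol P Q R S = v * tetVol A B C D := by
  rw [hP, hQ, hR, hS, tetVol_tetPoint hABCD, (abs_eq hv).2 hdet]

theorem tetVol_seven_pieces_of_tetPoint {A B C D K L M N : E³}
    (hABCD : AffineIndependent ℝ ![A, B, C, D]) {a b c d : ℝ} (ha : a ∈ Icc 0 1)
    (hb : b ∈ Icc 0 1) (hc : c ∈ Icc 0 1) (hd : d ∈ Icc 0 1)
    (habcd : a * b * c * d ≤ (1 - a) * (1 - b) * (1 - c) * (1 - d))
    (hK : K = tetPoint A B C D ![0, 1 - c, c]) (hL : L = tetPoint A B C D ![0, 0, 1 - d])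
    (hM : M = tetPoint A B C D ![a, 0, 0]) (hN : N = tetPoint A B C D ![1 - b, b, 0]) :
    tetVol K L M N + tetVol A K L M + tetVol B L M N + tetVol C K M N +
      tetVol D K L N + tetVol A C K M + tetVol B D L N = tetVol A B C D := by
  have hA : A = tetPoint A B C D ![0, 0, 0] := by simp [tetPoint]
  have hB : B = tetPoint A B C D ![1, 0, 0] := by simp [tetPoint]
  have hC : C = tetPoint A B C D ![0, 1, 0] := by simp [tetPoint]
  have hD : D = tetPoint A B C D ![0, 0, 1] := by simp [tetPoint]
  obtain ⟨ha₀, ha₁⟩ := ha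
  obtain ⟨hb₀, hb₁⟩ := hb
  obtain ⟨hc₀, hc₁⟩ := hc
  obtain ⟨hd₀, hd₁⟩ := hd
  have hKLMN : tetVol K L M N =
      ((1 - a) * (1 - b) * (1 - c) * (1 - d) - a * b * c * d) * tetVol A B C D :=
    tetVol_eq_of_tetPoint hABCD hK hL hM hN (sub_nonneg.2 habcd) <| .inl <| by
      simp only [Matrix.det_fin_three, Matrix.of_apply, Matrix.cons_val, Pi.sub_apply]; ring
  have hAKLM : tetVol A K L M = a * (1 - c) * (1 - d) * tetVol A B C D :=
    tetVol_eq_of_tetPoint hABCD hA hK hL hM (by positivity) <| .inl <| by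
      simp only [Matrix.det_fin_three, Matrix.of_apply, Matrix.cons_val, Pi.sub_apply]; ring
  have hBLMN : tetVol B L M N = b * (1 - a) * (1 - d) * tetVol A B C D :=
    tetVol_eq_of_tetPoint hABCD hB hL hM hN (by positivity) <| .inr <| by
      simp only [Matrix.det_fin_three, Matrix.of_apply, Matrix.cons_val, Pi.sub_apply]; ring
  have hCKMN : tetVol C K M N = c * (1 - a) * (1 - b) * tetVol A B C D :=
    tetVol_eq_of_tetPoint hABCD hC hK hM hN (by positivity) <| .inl <| by
      simp only [Matrix.det_fin_three, Matrix.of_apply, Matrix.cons_val, Pi.sub_apply]; ring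
  have hDKLN : tetVol D K L N = d * (1 - b) * (1 - c) * tetVol A B C D :=
    tetVol_eq_of_tetPoint hABCD hD hK hL hN (by positivity) <| .inr <| by
      simp only [Matrix.det_fin_three, Matrix.of_apply, Matrix.cons_val, Pi.sub_apply]; ring
  have hACKM : tetVol A C K M = a * c * tetVol A B C D :=
    tetVol_eq_of_tetPoint hABCD hA hC hK hM (by positivity) <| .inl <| by
      simp only [Matrix.det_fin_three, Matrix.of_apply, Matrix.cons_val, Pi.sub_apply]; ring
  have hBDLN : tetVol B D L N = b * d * tetVol A B C D :=
    tetVol_eq_of_tetPoint hABCD hB hD hL hN (by positivity) <| .inr <| by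
      simp only [Matrix.det_fin_three, Matrix.of_apply, Matrix.cons_val, Pi.sub_apply]; ring
  rw [hKLMN, hAKLM, hBLMN, hCKMN, hDKLN, hACKM, hBDLN]
  ring

theorem tetVol_seven_pieces {A B C D : E³} (hABCD : AffineIndependent ℝ ![A, B, C, D])
    {a b c d : ℝ} (ha : a ∈ Icc 0 1) (hb : b ∈ Icc 0 1) (hc : c ∈ Icc 0 1) (hd : d ∈ Icc 0 1)
    (habcd : a * b * c * d ≤ (1 - a) * (1 - b) * (1 - c) * (1 - d)) :
    let K := lineMap C D c; let L := lineMap D A d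
    let M := lineMap A B a; let N := lineMap B C b
    tetVol K L M N + tetVol A K L M + tetVol B L M N + tetVol C K M N +
      tetVol D K L N + tetVol A C K M + tetVol B D L N = tetVol A B C D := by
  refine tetVol_seven_pieces_of_tetPoint hABCD ha hb hc hd habcd ?_ ?_ ?_ ?_ <;>
    simp only [tetPoint, lineMap_apply_module, Matrix.cons_val, zero_smul, add_zero] <;> module

theorem exists_lineMap_eq_of_mem_segment_of_ne {E : Type*} [AddCommGroup E] [Module ℝ E]
    {X Y Z : E} (hZ : Z ∈ segment ℝ X Y) (hZY : Z ≠ Y) :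
    ∃ s ∈ Ico (0 : ℝ) 1, lineMap X Y s = Z := by
  rw [segment_eq_image_lineMap] at hZ
  obtain ⟨s, hs, rfl⟩ := hZ
  refine ⟨s, ⟨hs.1, hs.2.lt_of_ne ?_⟩, rfl⟩
  rintro rfl
  exact hZY (lineMap_apply_one X Y)

theorem dist_lineMap_div_dist_lineMap {V P : Type*} [NormedAddCommGroup V] [NormedSpace ℝ V]
    [MetricSpace P] [NormedAddTorsor V P] {X Y : P} (hXY : X ≠ Y) {s : ℝ}
    (hs : s ∈ Ico (0 : ℝ) 1) :
    dist X (lineMap X Y s) / dist (lineMap X Y s) Y = s / (1 - s) := by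
  rw [dist_left_lineMap, dist_lineMap_right, Real.norm_of_nonneg hs.1,
    Real.norm_of_nonneg (sub_nonneg.2 hs.2.le), mul_div_mul_right _ _ (dist_ne_zero.2 hXY)]

theorem tetrahedron_seven_piece_partition_general
    (A B C D M N K L : EuclideanSpace ℝ (Fin 3)) (x y z t : ℝ)
    (hABCD : AffineIndependent ℝ ![A, B, C, D])
    (hvol : tetVol A B C D = 1)
    (hxyzt : x * y * z * t < 1)
    (hM : M ∈ segment ℝ A B) (hMB : M ≠ B)
    (hN : N ∈ segment ℝ B C) (hNC : N ≠ C)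
    (hK : K ∈ segment ℝ C D) (hKD : K ≠ D)
    (hL : L ∈ segment ℝ D A) (hLA : L ≠ A)
    (hxr : dist C K / dist K D = x)
    (hyr : dist D L / dist L A = y)
    (hzr : dist A M / dist M B = z)
    (htr : dist B N / dist N C = t) :
    tetVol K L M N + tetVol A K L M + tetVol B L M N + tetVol C K M N +
      tetVol D K L N + tetVol A C K M + tetVol B D L N = 1 := by
  have hAB : A ≠ B := hABCD.injective.ne (show (0 : Fin 4) ≠ 1 by decide)
  have hBC : B ≠ C := hABCD.injective.ne (show (1 : Fin 4) ≠ 2 by decide)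
  have hCD : C ≠ D := hABCD.injective.ne (show (2 : Fin 4) ≠ 3 by decide)
  have hDA : D ≠ A := hABCD.injective.ne (show (3 : Fin 4) ≠ 0 by decide)
  obtain ⟨a, ha, rfl⟩ := exists_lineMap_eq_of_mem_segment_of_ne hM hMB
  obtain ⟨b, hb, rfl⟩ := exists_lineMap_eq_of_mem_segment_of_ne hN hNC
  obtain ⟨c, hc, rfl⟩ := exists_lineMap_eq_of_mem_segment_of_ne hK hKD
  obtain ⟨d, hd, rfl⟩ := exists_lineMap_eq_of_mem_segment_of_ne hL hLA
  rw [dist_lineMap_div_dist_lineMap hCD hc] at hxr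
  rw [dist_lineMap_div_dist_lineMap hDA hd] at hyr
  rw [dist_lineMap_div_dist_lineMap hAB ha] at hzr
  rw [dist_lineMap_div_dist_lineMap hBC hb] at htr
  subst hxr hyr hzr htr
  have hden : 0 < (1 - c) * (1 - d) * (1 - a) * (1 - b) :=
    mul_pos (mul_pos (mul_pos (sub_pos.2 hc.2) (sub_pos.2 hd.2)) (sub_pos.2 ha.2)) (sub_pos.2 hb.2)
  have habcd : a * b * c * d ≤ (1 - a) * (1 - b) * (1 - c) * (1 - d) := by
    rw [div_mul_div_comm, div_mul_div_comm, div_mul_div_comm, div_lt_one hden] at hxyzt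
    linarith
  rw [← hvol]
  exact tetVol_seven_pieces hABCD (Ico_subset_Icc_self ha) (Ico_subset_Icc_self hb)
    (Ico_subset_Icc_self hc) (Ico_subset_Icc_self hd) habcd

theorem tetrahedron_seven_piece_partition
    (A B C D M N K L : EuclideanSpace ℝ (Fin 3)) (x y z t : ℝ)
    (hABCD : AffineIndependent ℝ ![A, B, C, D])
    (hvol : tetVol A B C D = 1)
    (hx : 0 < x) (hy : 0 < y) (hz : 0 < z) (ht : 0 < t)
    (hxyzt : x * y * z * t < 1)
    (hM : M ∈ segment ℝ A B) (hMA : M ≠ A) (hMB : M ≠ B)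
    (hN : N ∈ segment ℝ B C) (hNB : N ≠ B) (hNC : N ≠ C)
    (hK : K ∈ segment ℝ C D) (hKC : K ≠ C) (hKD : K ≠ D)
    (hL : L ∈ segment ℝ D A) (hLD : L ≠ D) (hLA : L ≠ A)
    (hxr : dist C K / dist K D = x)
    (hyr : dist D L / dist L A = y)
    (hzr : dist A M / dist M B = z)
    (htr : dist B N / dist N C = t) :
    tetVol K L M N + tetVol A K L M + tetVol B L M N + tetVol C K M N +
      tetVol D K L N + tetVol A C K M + tetVol B D L N = 1 :=
  tetrahedron_seven_piece_partition_general A B C D M N K L x y z t hABCD hvol hxyzt hM hMB hN hNC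
    hK hKD hL hLA hxr hyr hzr htr
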